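/- Let G = (V, E, w) be a finite directed graph with integer edge weights satisfying −W ≤ w(e) ≤ W for all e ∈ E, where W is a positive integer. Define the graph G′ with vertex set {v^i : v ∈ V, −W ≤ i ≤ W} and with the following edges: an edge (v^{i+1}, v^i) of weight −1 for every v ∈ V and every −W ≤ i ≤ −1; an edge (v^{i−1}, v^i) of weight +1 for every v ∈ V and every 1 ≤ i ≤ W; and an edge (u^k, v^0) of weight 0 for every edge (u, v) ∈ E with w(u, v) = k. Then for all u, v ∈ V, there exists a nonnegative prefix path from u to v in G if and only if there exists a nonnegative prefix path from u^0 to v^0 in G′. -/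
import Mathlib


/-- `IsWalk E u k`: the sequence `u 0, u 1, …, u k` is a walk in the directed
graph with edge relation `E`. -/
def IsWalk {V : Type*} (E : V → V → Prop) (u : ℕ → V) (k : ℕ) : Prop :=
  ∀ i < k, E (u i) (u (i + 1))

/-- The total weight of the walk `u 0, …, u k`. -/
def walkWeight {V : Type*} (w : V → V → ℤ) (u : ℕ → V) (k : ℕ) : ℤ :=
  ∑ i ∈ Finset.range k, w (u i) (u (i + 1))

/-- `NonnegPrefix w u k`: every prefix sum of the walk `u 0, …, u k` is nonnegative. -/
def NonnegPrefix {V : Type*} (w : V → V → ℤ) (u : ℕ → V) (k : ℕ) : Prop :=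
  ∀ i ≤ k, 0 ≤ walkWeight w u i

/-- There is a nonnegative prefix path from `s` to `t`. -/
def NNPPath {V : Type*} (E : V → V → Prop) (w : V → V → ℤ) (s t : V) : Prop :=
  ∃ (u : ℕ → V) (k : ℕ), u 0 = s ∧ u k = t ∧ IsWalk E u k ∧ NonnegPrefix w u k

/-- The edge relation of the graph `G′` of the Alon–Galil–Margalit reduction.
The vertex `v^i` is encoded as the pair `(v, i)`; the copies with `-W ≤ i ≤ W`
carry all the edges (pairs with `|i| > W` are isolated).  The edges are:
`(v^{i+1}, v^i)` for `-W ≤ i ≤ -1`, `(v^{i-1}, v^i)` for `1 ≤ i ≤ W`, and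
`(u^k, v^0)` for every edge `(u,v) ∈ E` with `w u v = k`. -/
def Ered {V : Type*} (E : V → V → Prop) (w : V → V → ℤ) (W : ℤ) :
    V × ℤ → V × ℤ → Prop := fun p q =>
  (p.1 = q.1 ∧ q.2 = p.2 - 1 ∧ -W ≤ q.2 ∧ q.2 ≤ -1) ∨
  (p.1 = q.1 ∧ q.2 = p.2 + 1 ∧ 1 ≤ q.2 ∧ q.2 ≤ W) ∨
  (E p.1 q.1 ∧ q.2 = 0 ∧ p.2 = w p.1 q.1)

/-- The weight function of `G′`: chain edges going down (to a copy of negative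
index) have weight `-1`, chain edges going up (to a copy of positive index) have
weight `+1`, and the edges `(u^k, v^0)` (going to a copy of index `0`) have
weight `0`.  (On the edges of `G′` the three cases are disjoint, as they are
distinguished by the index of the target vertex.) -/
def wred {V : Type*} : V × ℤ → V × ℤ → ℤ := fun _ q =>
  if q.2 = 0 then 0 else if q.2 < 0 then -1 else 1

lemma walkWeight_succ {V : Type*} (w : V → V → ℤ) (u : ℕ → V) (k : ℕ) :
    walkWeight w u (k + 1) = walkWeight w u k + w (u k) (u (k + 1)) :=
  Finset.sum_range_succ _ _

lemma walkWeight_zero {V : Type*} (w : V → V → ℤ) (u : ℕ → V) :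
    walkWeight w u 0 = 0 := Finset.sum_range_zero _

lemma walkWeight_succ' {V : Type*} (w : V → V → ℤ) (u : ℕ → V) (k : ℕ) :
    walkWeight w u (k + 1) = w (u 0) (u 1) + walkWeight w (fun n => u (n + 1)) k := by
  unfold walkWeight
  rw [Finset.sum_range_succ', add_comm]

lemma walkWeight_congr {V : Type*} (w : V → V → ℤ) (u v : ℕ → V) (k : ℕ)
    (h : ∀ n ≤ k, u n = v n) : walkWeight w u k = walkWeight w v k := by
  unfold walkWeight
  refine Finset.sum_congr rfl fun i hi => ?_
  rw [Finset.mem_range] at hi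
  rw [h i (by omega), h (i + 1) (by omega)]

lemma bwd_extract {V : Type*} (E : V → V → Prop) (w : V → V → ℤ) (W : ℤ) :
    ∀ (k : ℕ) (p : ℕ → V × ℤ) (u v : V) (c : ℤ),
      p 0 = (u, c) → p k = (v, 0) → IsWalk (Ered E w W) p k →
      ∃ (x : ℕ → V) (m : ℕ), x 0 = u ∧ x m = v ∧ IsWalk E x m ∧
        ∀ i ≤ m, i ≠ 0 →
          ∃ j ≤ k, walkWeight w x i = walkWeight (wred (V := V)) p j + c := by
  intro k
  induction k with
  | zero =>
      intro p u v c h0 hk _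
      rw [h0, Prod.mk.injEq] at hk
      exact ⟨fun _ => u, 0, rfl, hk.1, fun i hi => by omega,
        fun i hi hne => absurd (Nat.le_zero.mp hi) hne⟩
  | succ k ih =>
      intro p u v c h0 hk hwalk
      have h1 : Ered E w W (p 0) (p 1) := hwalk 0 (by omega)
      have hwalk' : IsWalk (Ered E w W) (fun n => p (n + 1)) k :=
        fun i hi => hwalk (i + 1) (by omega)
      have hshift : ∀ j : ℕ, walkWeight (wred (V := V)) (fun n => p (n + 1)) j =
          walkWeight (wred (V := V)) p (j + 1) - wred (p 0) (p 1) := by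
        intro j
        rw [walkWeight_succ']
        ring
      rcases h1 with ⟨he1, he2, he3, he4⟩ | ⟨he1, he2, he3, he4⟩ | ⟨he1, he2, he3⟩
      · -- chain down
        have hp1 : p 1 = (u, c - 1) := by
          rw [h0] at he1 he2
          exact Prod.ext he1.symm he2
        obtain ⟨x, m, hx0, hxm, hxw, hxp⟩ := ih (fun n => p (n + 1)) u v (c - 1) hp1 hk hwalk'
        refine ⟨x, m, hx0, hxm, hxw, fun i hi hne => ?_⟩
        obtain ⟨j, hj, hval⟩ := hxp i hi hne
        refine ⟨j + 1, by omega, ?_⟩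
        have hwval : wred (p 0) (p 1) = -1 := by
          simp only [wred]
          rw [if_neg (by omega), if_pos (by omega)]
        rw [hval, hshift j, hwval, h0] at *
        omega
      · -- chain up
        have hp1 : p 1 = (u, c + 1) := by
          rw [h0] at he1 he2
          exact Prod.ext he1.symm he2
        obtain ⟨x, m, hx0, hxm, hxw, hxp⟩ := ih (fun n => p (n + 1)) u v (c + 1) hp1 hk hwalk'
        refine ⟨x, m, hx0, hxm, hxw, fun i hi hne => ?_⟩
        obtain ⟨j, hj, hval⟩ := hxp i hi hne
        refine ⟨j + 1, by omega, ?_⟩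
        have hwval : wred (p 0) (p 1) = 1 := by
          simp only [wred]
          rw [if_neg (by omega), if_neg (by omega)]
        rw [hval, hshift j, hwval] at *
        omega
      · -- E-edge
        set b := (p 1).1 with hb
        have hEub : E u b := by rw [h0] at he1; exact he1
        have hcval : c = w u b := by rw [h0] at he3; exact he3
        have hp1 : p 1 = (b, 0) := Prod.ext rfl he2
        obtain ⟨x, m, hx0, hxm, hxw, hxp⟩ := ih (fun n => p (n + 1)) b v 0 hp1 hk hwalk'
        refine ⟨fun n => if n = 0 then u else x (n - 1), m + 1, if_pos rfl, ?_, ?_, ?_⟩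
        · simp only [if_neg (by omega : m + 1 ≠ 0)]
          simpa using hxm
        · intro i hi
          match i with
          | 0 => simpa [hx0] using hEub
          | (n + 1) =>
              simp only [if_neg (by omega : n + 1 ≠ 0), if_neg (by omega : n + 2 ≠ 0)]
              have := hxw n (by omega)
              simpa using this
        · intro i hi hne
          obtain ⟨i', rfl⟩ : ∃ i', i = i' + 1 := ⟨i - 1, by omega⟩
          have hwred0 : wred (p 0) (p 1) = 0 := by
            simp [wred, he2]
          have hdecomp : walkWeight w (fun n => if n = 0 then u else x (n - 1)) (i' + 1)
              = w u b + walkWeight w x i' := by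
            rw [walkWeight_succ', show (if (0:ℕ) = 0 then u else x (0 - 1)) = u from rfl,
              show (if (1:ℕ) = 0 then u else x (1 - 1)) = x 0 from rfl, hx0,
              walkWeight_congr w _ x i' (fun n _ => by simp)]
          rcases Nat.eq_zero_or_pos i' with rfl | hi'
          · refine ⟨1, by omega, ?_⟩
            have : walkWeight (wred (V := V)) p 1 = 0 := by
              rw [show (1 : ℕ) = 0 + 1 from rfl, walkWeight_succ']
              simp [walkWeight_zero, hwred0]
            rw [hdecomp, walkWeight_zero, this, hcval]
            ring
          · obtain ⟨j, hj, hval⟩ := hxp i' (by omega) (by omega)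
            refine ⟨j + 1, by omega, ?_⟩
            rw [hdecomp, hval, hshift j, hwred0, hcval]
            ring

lemma walkWeight_add {V : Type*} (w : V → V → ℤ) (u : ℕ → V) (a b : ℕ) :
    walkWeight w u (a + b) = walkWeight w u a + walkWeight w (fun n => u (a + n)) b := by
  induction b with
  | zero => simp [walkWeight]
  | succ b ih =>
      rw [← Nat.add_assoc, walkWeight_succ, ih, walkWeight_succ]
      have h1 : a + b + 1 = a + (b + 1) := by omega
      rw [h1]
      ring

lemma fwd_construct {V : Type*} (E : V → V → Prop) (w : V → V → ℤ) (W : ℤ)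
    (hw : ∀ a b, E a b → -W ≤ w a b ∧ w a b ≤ W) :
    ∀ (m : ℕ) (x : ℕ → V) (u v : V),
      x 0 = u → x m = v → IsWalk E x m →
      ∃ (p : ℕ → V × ℤ) (K : ℕ), p 0 = (u, 0) ∧ p K = (v, 0) ∧
        IsWalk (Ered E w W) p K ∧
        ∀ j ≤ K, ∃ i ≤ m, walkWeight w x i ≤ walkWeight (wred (V := V)) p j := by
  intro m
  induction m with
  | zero =>
      intro x u v h0 hm _
      refine ⟨fun _ => (u, 0), 0, rfl, by rw [← hm, h0], fun i hi => by omega, ?_⟩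
      intro j hj
      refine ⟨0, le_refl _, ?_⟩
      rw [Nat.le_zero.mp hj, walkWeight_zero, walkWeight_zero]
  | succ m ih =>
      intro x u v h0 hm hwalk
      have hE : E (x 0) (x 1) := hwalk 0 (by omega)
      obtain ⟨hb1, hb2⟩ := hw _ _ hE
      set c := w (x 0) (x 1) with hc
      set a := c.natAbs with ha
      obtain ⟨p', K', hp0, hpK, hpw, hpp⟩ :=
        ih (fun n => x (n + 1)) (x 1) v rfl hm (fun i hi => hwalk (i + 1) (by omega))
      set p : ℕ → V × ℤ :=
        fun n => if n < a + 1 then (x 0, if 0 ≤ c then (n : ℤ) else -(n : ℤ))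
          else p' (n - (a + 1)) with hpdef
      have hgad : ∀ n, n < a + 1 → p n = (x 0, if 0 ≤ c then (n : ℤ) else -(n : ℤ)) :=
        fun n h => by simp only [hpdef]; rw [if_pos h]
      have hrest : ∀ n, p (a + 1 + n) = p' n := fun n => by
        simp only [hpdef]; rw [if_neg (by omega)]
        congr 1
        omega
      have hga : p a = (x 0, c) := by
        rw [hgad a (by omega)]
        congr 1
        split <;> omega
      have hx1c : walkWeight w x 1 = c := by
        rw [show (1 : ℕ) = 0 + 1 from rfl, walkWeight_succ, walkWeight_zero, zero_add]
      -- prefix sums inside the gadget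
      have hgadw : ∀ j ≤ a, walkWeight (wred (V := V)) p j
          = (if 0 ≤ c then (j : ℤ) else -(j : ℤ)) := by
        intro j hj
        induction j with
        | zero => rw [walkWeight_zero]; split <;> simp
        | succ j ihj =>
            rw [walkWeight_succ, ihj (by omega), hgad j (by omega), hgad (j + 1) (by omega)]
            simp only [wred]
            split_ifs <;> push_cast <;> omega
      have hEedge : wred (p a) (p (a + 1)) = 0 := by
        have h1 : p (a + 1) = p' 0 := by rw [← hrest 0]
        rw [h1, hp0]
        simp [wred]
      have hwa1 : walkWeight (wred (V := V)) p (a + 1) = c := by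
        rw [walkWeight_succ, hgadw a (le_refl _), hEedge]
        split <;> omega
      refine ⟨p, a + 1 + K', ?_, ?_, ?_, ?_⟩
      · rw [hgad 0 (by omega), h0]
        congr 1
        split <;> simp
      · rw [hrest K', hpK]
      · intro n hn
        rcases lt_trichotomy n a with hna | rfl | hna
        · -- inside gadget
          rw [hgad n (by omega), hgad (n + 1) (by omega)]
          by_cases hc0 : 0 ≤ c
          · refine Or.inr (Or.inl ⟨rfl, ?_, ?_, ?_⟩) <;> simp only [if_pos hc0] <;>
              push_cast <;> omega
          · refine Or.inl ⟨rfl, ?_, ?_, ?_⟩ <;> simp only [if_neg hc0] <;>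
              push_cast <;> omega
        · -- the E-edge
          have h1 : p (a + 1) = (x 1, 0) := (hrest 0).trans hp0
          rw [hga, h1]
          exact Or.inr (Or.inr ⟨hE, rfl, rfl⟩)
        · -- inside p'
          have h1 : p n = p' (n - (a + 1)) := by rw [← hrest (n - (a + 1))]; congr 1; omega
          have h2 : p (n + 1) = p' (n - (a + 1) + 1) := by
            rw [← hrest (n - (a + 1) + 1)]; congr 1; omega
          rw [h1, h2]
          exact hpw (n - (a + 1)) (by omega)
      · intro j hj
        rcases le_or_gt j a with hja | hja
        · rw [hgadw j hja]
          by_cases hc0 : 0 ≤ c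
          · refine ⟨0, by omega, ?_⟩
            rw [walkWeight_zero, if_pos hc0]
            omega
          · refine ⟨1, by omega, ?_⟩
            rw [hx1c, if_neg hc0]
            omega
        · set t := j - (a + 1) with htdef
          have hjt : j = (a + 1) + t := by omega
          have hsplit : walkWeight (wred (V := V)) p j
              = c + walkWeight (wred (V := V)) p' t := by
            rw [hjt, walkWeight_add, hwa1]
            congr 1
            exact walkWeight_congr _ _ _ _ (fun n _ => hrest n)
          obtain ⟨i, hi, hile⟩ := hpp t (by omega)
          refine ⟨i + 1, by omega, ?_⟩
          rw [hsplit, walkWeight_succ', ← hc]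
          omega

/-- For a finite graph with integer weights in `[-W, W]` and the
reduced graph `G′` with weights in `{-1, 0, +1}`, nonnegative prefix reachability
from `u` to `v` in `G` coincides with nonnegative prefix reachability from `u^0`
to `v^0` in `G′`. -/
theorem nnp_iff_nnp_in_reduced {V : Type*} [Fintype V]
    (E : V → V → Prop) (w : V → V → ℤ) (W : ℤ) (hW : 0 < W)
    (hw : ∀ a b, E a b → -W ≤ w a b ∧ w a b ≤ W) :
    ∀ u v : V, NNPPath E w u v ↔
      NNPPath (Ered E w W) (wred (V := V)) (u, (0 : ℤ)) (v, (0 : ℤ)) := by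
  intro u v
  constructor
  · rintro ⟨x, m, hx0, hxm, hxw, hxp⟩
    obtain ⟨p, K, hp0, hpK, hpw, hpp⟩ := fwd_construct E w W hw m x u v hx0 hxm hxw
    refine ⟨p, K, hp0, hpK, hpw, fun j hj => ?_⟩
    obtain ⟨i, hi, hile⟩ := hpp j hj
    exact le_trans (hxp i hi) hile
  · rintro ⟨p, K, hp0, hpK, hpw, hpp⟩
    obtain ⟨x, m, hx0, hxm, hxw, hxp⟩ := bwd_extract E w W K p u v 0 hp0 hpK hpw
    refine ⟨x, m, hx0, hxm, hxw, fun i hi => ?_⟩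
    rcases Nat.eq_zero_or_pos i with rfl | hipos
    · rw [walkWeight_zero]
    · obtain ⟨j, hj, hval⟩ := hxp i hi (by omega)
      rw [hval, add_zero]
      exact hpp j hj
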